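/- arXiv:1912.09376 — 4 statements merged into one kernel-verified Lean document; each statement's English description precedes it below -/
import Mathlib

section
/- Let n ≥ 5 and let Z₀(x) := (n(n−2))^((n−2)/4)·((n−2)/2)·(|x|²−1)/(1+|x|²)^(n/2). Then ∫_{ℝⁿ} U_{1,0}(x)·Z₀(x) dx = ∫_{ℝⁿ} U_{1,0}(x)² dx, both integrals being finite. -/
/-!
Both sides are multiples of `(n(n-2))^((n-2)/2)` times integrals of radial functions of
`ρ = 1 + |x|²`, namely `(n-2)/2 · (|x|² - 1) ρ^(1-n)` and `ρ^(2-n)`, integrable for `n > 4`.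
In polar coordinates their difference becomes `r^(n-1) (…)`, which is the exact derivative of
`-r^n ρ^(2-n) / 2`; this primitive vanishes at `r = 0` and, because `2(n-2) > n`, at infinity.
The identity is the derivative at `δ = 1` of the scaling law `∫ U_δ² = δ² ∫ U²`.
-/

open MeasureTheory Real Set Filter Topology Module

/-- `(U·Z₀ - U²) / (n(n-2))^((n-2)/2)` as a function of `r = |x|`. -/
noncomputable def bubbleDefect (d r : ℝ) : ℝ :=
  (d - 2) / 2 * ((r ^ 2 - 1) * (1 + r ^ 2) ^ (-(d - 1))) - (1 + r ^ 2) ^ (-(d - 2))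

lemma sqrt_div_rpow {a ρ : ℝ} (ha : 0 ≤ a) (hρ : 0 < ρ) (e : ℝ) :
    (√a / ρ) ^ e = a ^ (e / 2) * ρ ^ (-e) := by
  rw [div_rpow (sqrt_nonneg a) hρ.le, sqrt_eq_rpow, ← rpow_mul ha, div_eq_mul_inv,
    ← rpow_neg hρ.le, one_div_mul_eq_div]

lemma bubble_mul_Z0_eq {N ρ : ℝ} (hN : 2 < N) (hρ : 0 < ρ) (t : ℝ) :
    (√(N * (N - 2)) / ρ) ^ ((N - 2) / 2) *
        ((N * (N - 2)) ^ ((N - 2) / 4) * ((N - 2) / 2) * (t / ρ ^ (N / 2))) =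
      (N * (N - 2)) ^ ((N - 2) / 2) * ((N - 2) / 2 * (t * ρ ^ (-(N - 1)))) := by
  have ha : 0 < N * (N - 2) := by nlinarith
  rw [sqrt_div_rpow ha.le hρ, div_eq_mul_inv t, ← rpow_neg hρ.le]
  calc _ = ((N * (N - 2)) ^ ((N - 2) / 2 / 2) * (N * (N - 2)) ^ ((N - 2) / 4)) *
        ((N - 2) / 2 * (t * (ρ ^ (-((N - 2) / 2)) * ρ ^ (-(N / 2))))) := by ring
    _ = _ := by rw [← rpow_add ha, ← rpow_add hρ]; ring_nf

lemma bubble_sq_eq {N ρ : ℝ} (hN : 2 ≤ N) (hρ : 0 < ρ) :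
    ((√(N * (N - 2)) / ρ) ^ ((N - 2) / 2)) ^ 2 =
      (N * (N - 2)) ^ ((N - 2) / 2) * ρ ^ (-(N - 2)) := by
  have ha : 0 ≤ N * (N - 2) := by nlinarith
  rw [sqrt_div_rpow ha hρ, mul_pow, ← rpow_mul_natCast ha, ← rpow_mul_natCast hρ.le]
  ring_nf

lemma rpow_neg_eq_rpow_neg_add_one_mul {ρ : ℝ} (hρ : 0 < ρ) (s : ℝ) :
    ρ ^ (-s) = ρ ^ (-(s + 1)) * ρ := by
  rw [← rpow_add_one hρ.ne', neg_add, neg_add_cancel_right]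

lemma hasDerivAt_pow_mul_one_add_sq_rpow_neg {d : ℕ} (hd : 1 ≤ d) (s r : ℝ) :
    HasDerivAt (fun t : ℝ => t ^ d * (1 + t ^ 2) ^ (-s))
      (r ^ (d - 1) * ((d * (1 + r ^ 2) - 2 * s * r ^ 2) * (1 + r ^ 2) ^ (-(s + 1)))) r := by
  have hρ : 0 < 1 + r ^ 2 := by positivity
  have hsq : HasDerivAt (fun t : ℝ => 1 + t ^ 2) (2 * r) r := by
    simpa using (hasDerivAt_pow 2 r).const_add 1
  refine ((hasDerivAt_pow d r).mul (hsq.rpow_const (p := -s) (Or.inl hρ.ne'))).congr_deriv ?_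
  obtain ⟨k, rfl⟩ := Nat.exists_eq_add_of_le' hd
  rw [rpow_neg_eq_rpow_neg_add_one_mul hρ, show -s - 1 = -(s + 1) by ring]
  simp only [Nat.add_sub_cancel, pow_succ]
  ring

lemma hasDerivAt_bubbleDefect_primitive {d : ℕ} (hd : 1 ≤ d) (r : ℝ) :
    HasDerivAt (fun t : ℝ => -(1 / 2) * (t ^ d * (1 + t ^ 2) ^ (-((d : ℝ) - 2))))
      (r ^ (d - 1) * bubbleDefect d r) r := by
  refine ((hasDerivAt_pow_mul_one_add_sq_rpow_neg hd (d - 2) r).const_mul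
    (-(1 / 2))).congr_deriv ?_
  rw [bubbleDefect, rpow_neg_eq_rpow_neg_add_one_mul (by positivity : 0 < 1 + r ^ 2) (d - 2)]
  ring_nf

lemma tendsto_pow_mul_one_add_sq_rpow_neg_atTop {d : ℕ} {s : ℝ} (hs : (d : ℝ) < 2 * s) :
    Tendsto (fun t : ℝ => t ^ d * (1 + t ^ 2) ^ (-s)) atTop (𝓝 0) := by
  have hs0 : 0 ≤ s := by linarith [(Nat.cast_nonneg d : (0 : ℝ) ≤ d)]
  refine squeeze_zero' ?_ ?_ (tendsto_rpow_neg_atTop (y := 2 * s - d) (by linarith))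
  · filter_upwards [eventually_gt_atTop 0] with t ht
    positivity
  · filter_upwards [eventually_gt_atTop 0] with t ht
    have hρ : (1 + t ^ 2) ^ (-s) ≤ (t ^ (2 : ℝ)) ^ (-s) :=
      rpow_le_rpow_of_nonpos (by positivity) (by rw [rpow_two]; linarith) (by linarith)
    calc t ^ d * (1 + t ^ 2) ^ (-s) ≤ t ^ (d : ℝ) * (t ^ (2 : ℝ)) ^ (-s) := by
          rw [rpow_natCast]
          gcongr
      _ = t ^ (-(2 * s - d)) := by
          rw [← rpow_mul ht.le, ← rpow_add ht]
          ring_nf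

lemma integral_Ioi_pow_mul_bubbleDefect {d : ℕ} (hd : 4 < d)
    (hint : IntegrableOn (fun r : ℝ => r ^ (d - 1) * bubbleDefect d r) (Ioi 0)) :
    ∫ r in Ioi 0, r ^ (d - 1) * bubbleDefect d r = 0 := by
  have hd' : (4 : ℝ) < d := by exact_mod_cast hd
  have hlim := (tendsto_pow_mul_one_add_sq_rpow_neg_atTop (d := d) (s := d - 2)
    (by linarith)).const_mul (-(1 / 2))
  rw [integral_Ioi_of_hasDerivAt_of_tendsto'
    (fun r _ => hasDerivAt_bubbleDefect_primitive (by omega) r) hint hlim]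
  simp [zero_pow (by omega : d ≠ 0)]

section HaarMeasure

variable {E : Type*} [NormedAddCommGroup E] [NormedSpace ℝ E] [FiniteDimensional ℝ E]
  [MeasurableSpace E] [BorelSpace E] (μ : Measure E) [μ.IsAddHaarMeasure]

lemma integrable_one_add_norm_sq_rpow_neg {s : ℝ} (hs : (finrank ℝ E : ℝ) < 2 * s) :
    Integrable (fun x : E => (1 + ‖x‖ ^ 2) ^ (-s)) μ := by
  simpa only [show -(2 * s) / 2 = -s by ring] using
    integrable_rpow_neg_one_add_norm_sq (μ := μ) hs

lemma integrable_norm_sq_sub_one_mul_rpow_neg {s : ℝ} (hs : (finrank ℝ E : ℝ) + 2 < 2 * s) :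
    Integrable (fun x : E => (‖x‖ ^ 2 - 1) * (1 + ‖x‖ ^ 2) ^ (-s)) μ := by
  refine (integrable_one_add_norm_sq_rpow_neg μ (s := s - 1) (by linarith)).mono'
    (Measurable.aestronglyMeasurable (by fun_prop)) (Eventually.of_forall fun x => ?_)
  have hρ : 0 < 1 + ‖x‖ ^ 2 := by positivity
  have hsq : |‖x‖ ^ 2 - 1| ≤ 1 + ‖x‖ ^ 2 := abs_le.2 ⟨by nlinarith, by nlinarith⟩
  rw [rpow_neg_eq_rpow_neg_add_one_mul hρ (s - 1), sub_add_cancel, norm_mul, norm_of_nonneg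
    (by positivity : 0 ≤ (1 + ‖x‖ ^ 2) ^ (-s)), Real.norm_eq_abs, mul_comm]
  gcongr

theorem integral_norm_sq_sub_one_mul_rpow_neg_eq (hE : 4 < finrank ℝ E) :
    ∫ x, ((finrank ℝ E : ℝ) - 2) / 2 *
        ((‖x‖ ^ 2 - 1) * (1 + ‖x‖ ^ 2) ^ (-((finrank ℝ E : ℝ) - 1))) ∂μ =
      ∫ x, (1 + ‖x‖ ^ 2) ^ (-((finrank ℝ E : ℝ) - 2)) ∂μ := by
  have : Nontrivial E := Module.nontrivial_of_finrank_pos (R := ℝ) (by omega)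
  have hE' : (4 : ℝ) < finrank ℝ E := by exact_mod_cast hE
  have h1 := (integrable_norm_sq_sub_one_mul_rpow_neg μ (s := finrank ℝ E - 1)
    (by linarith)).const_mul (((finrank ℝ E : ℝ) - 2) / 2)
  have h2 := integrable_one_add_norm_sq_rpow_neg μ (s := finrank ℝ E - 2) (by linarith)
  have hint := (integrable_fun_norm_addHaar μ (f := bubbleDefect (finrank ℝ E))).1 (h1.sub h2)
  rw [← sub_eq_zero, ← integral_sub h1 h2]
  change ∫ x, bubbleDefect (finrank ℝ E) ‖x‖ ∂μ = 0
  simp only [smul_eq_mul] at hint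
  rw [integral_fun_norm_addHaar]
  simp only [smul_eq_mul, integral_Ioi_pow_mul_bubbleDefect hE hint, mul_zero, smul_zero]

end HaarMeasure

/-- For `n ≥ 5`, with
`Z₀(x) = (n(n−2))^((n−2)/4)·((n−2)/2)·(|x|²−1)/(1+|x|²)^(n/2)`, one has
`∫ U_{1,0}·Z₀ dx = ∫ U_{1,0}² dx`, both integrals being finite. -/
theorem bubble_Z0_L2_identity (n : ℕ) (hn : 5 ≤ n)
    (U : EuclideanSpace ℝ (Fin n) → ℝ)
    (hU : ∀ x, U x =
      (Real.sqrt ((n : ℝ) * ((n : ℝ) - 2)) / (1 + ‖x‖ ^ 2)) ^ (((n : ℝ) - 2) / 2))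
    (Z₀ : EuclideanSpace ℝ (Fin n) → ℝ)
    (hZ₀ : ∀ x, Z₀ x = ((n : ℝ) * ((n : ℝ) - 2)) ^ (((n : ℝ) - 2) / 4) *
      (((n : ℝ) - 2) / 2) * ((‖x‖ ^ 2 - 1) / (1 + ‖x‖ ^ 2) ^ ((n : ℝ) / 2))) :
    Integrable (fun x => U x * Z₀ x) ∧
    Integrable (fun x => U x ^ 2) ∧
    ∫ x, U x * Z₀ x = ∫ x, U x ^ 2 := by
  have hn' : (5 : ℝ) ≤ n := by exact_mod_cast hn
  have hdim : finrank ℝ (EuclideanSpace ℝ (Fin n)) = n := finrank_euclideanSpace_fin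
  set c := ((n : ℝ) * ((n : ℝ) - 2)) ^ (((n : ℝ) - 2) / 2)
  have hUZ : (fun x => U x * Z₀ x) =
      fun x => c * (((n : ℝ) - 2) / 2 * ((‖x‖ ^ 2 - 1) * (1 + ‖x‖ ^ 2) ^ (-((n : ℝ) - 1)))) :=
    funext fun x => by rw [hU, hZ₀, bubble_mul_Z0_eq (by linarith) (by positivity)]
  have hU2 : (fun x => U x ^ 2) = fun x => c * (1 + ‖x‖ ^ 2) ^ (-((n : ℝ) - 2)) :=
    funext fun x => by rw [hU, bubble_sq_eq (by linarith) (by positivity)]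
  have h1 := integrable_norm_sq_sub_one_mul_rpow_neg volume (s := n - 1) (by rw [hdim]; linarith)
  have h2 := integrable_one_add_norm_sq_rpow_neg volume (s := n - 2) (by rw [hdim]; linarith)
  have hid := integral_norm_sq_sub_one_mul_rpow_neg_eq
    (volume : Measure (EuclideanSpace ℝ (Fin n))) (by omega)
  rw [hdim] at hid
  rw [hUZ, hU2, integral_const_mul c, integral_const_mul c, hid]
  exact ⟨(h1.const_mul _).const_mul c, h2.const_mul c, rfl⟩
end

section
/- Let n ≥ 7 and let Z₀(x) := (n(n−2))^((n−2)/4)·((n−2)/2)·(|x|²−1)/(1+|x|²)^(n/2). Then ∫_{ℝⁿ} |x|²·U_{1,0}(x)·Z₀(x) dx = 2·∫_{ℝⁿ} |x|²·U_{1,0}(x)² dx, both integrals being finite. -/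
/-!
Both integrands are radial, so polar coordinates turn them into multiples of the moments
`M k l = ∫₀^∞ r^k (1 + r²)^(-l) dr`. Since `U·Z₀` is a multiple of `(|x|² - 1)(1 + |x|²)^(1-n)`
and `U²` one of `(1 + |x|²)^(2-n)`, the identity becomes a linear relation between
`M (n+3) (n-1)`, `M (n+1) (n-1)` and `M (n+1) (n-2)`. It follows from the algebraic relation
`M (k+2) (l+1) = M k l - M k (l+1)` and the integration by parts
`(k+1) M k l = 2l M (k+2) (l+1)` with `k = n+1`, `l = n-2`; the boundary term
`r^(n+2) (1 + r²)^(2-n)` vanishes at infinity exactly when `n ≥ 7`.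
-/

open MeasureTheory Real Set Filter Module Metric

noncomputable def oneAddSqMoment (k l : ℕ) : ℝ :=
  ∫ r in Ioi (0 : ℝ), r ^ k / (1 + r ^ 2) ^ l

theorem continuous_pow_div_one_add_sq_pow (k l : ℕ) :
    Continuous fun r : ℝ => r ^ k / (1 + r ^ 2) ^ l :=
  (continuous_pow k).div (by fun_prop) fun r => by positivity

theorem pow_div_one_add_sq_pow_le {t : ℝ} (ht : 0 ≤ t) (k l : ℕ) :
    t ^ k / (1 + t ^ 2) ^ l ≤ (1 + t ^ 2) ^ (-((2 * l - k : ℝ)) / 2) := by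
  have hs : 0 < 1 + t ^ 2 := by positivity
  have hx : t ≤ √(1 + t ^ 2) := le_sqrt_of_sq_le (by linarith)
  calc t ^ k / (1 + t ^ 2) ^ l ≤ √(1 + t ^ 2) ^ k / (1 + t ^ 2) ^ l := by gcongr
    _ = (1 + t ^ 2) ^ (-((2 * l - k : ℝ)) / 2) := by
      rw [show -((2 * l - k : ℝ)) / 2 = k / 2 - l by ring, rpow_sub hs, rpow_natCast,
        rpow_div_two_eq_sqrt _ hs.le, rpow_natCast]

section NormedSpace

variable {E : Type*} [NormedAddCommGroup E] [NormedSpace ℝ E] [FiniteDimensional ℝ E]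
  [MeasurableSpace E] [BorelSpace E] (μ : Measure E) [μ.IsAddHaarMeasure]

theorem integrable_norm_pow_div_one_add_norm_sq_pow {k l : ℕ} (hkl : finrank ℝ E + k < 2 * l) :
    Integrable (fun x : E => ‖x‖ ^ k / (1 + ‖x‖ ^ 2) ^ l) μ := by
  refine (integrable_rpow_neg_one_add_norm_sq (μ := μ) (r := 2 * l - k) ?_).mono'
    ((continuous_pow_div_one_add_sq_pow k l).comp continuous_norm).aestronglyMeasurable
    (ae_of_all _ fun x => ?_)
  · have : ((finrank ℝ E + k : ℕ) : ℝ) < ((2 * l : ℕ) : ℝ) := by exact_mod_cast hkl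
    push_cast at this
    linarith
  · rw [norm_of_nonneg (by positivity)]
    exact pow_div_one_add_sq_pow_le (norm_nonneg x) k l

theorem integral_norm_pow_div_one_add_norm_sq_pow [Nontrivial E] (k l : ℕ) :
    ∫ x, ‖x‖ ^ k / (1 + ‖x‖ ^ 2) ^ l ∂μ =
      finrank ℝ E * μ.real (ball 0 1) * oneAddSqMoment (k + finrank ℝ E - 1) l := by
  have hd : 1 ≤ finrank ℝ E := finrank_pos
  rw [integral_fun_norm_addHaar μ (fun r => r ^ k / (1 + r ^ 2) ^ l), nsmul_eq_mul, smul_eq_mul,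
    mul_assoc, oneAddSqMoment]
  congr 3 with r
  rw [smul_eq_mul, ← mul_div_assoc, ← pow_add]
  congr 2
  omega

end NormedSpace

theorem integrableOn_pow_div_one_add_sq_pow {k l : ℕ} (hkl : k + 1 < 2 * l) :
    IntegrableOn (fun r : ℝ => r ^ k / (1 + r ^ 2) ^ l) (Ioi 0) := by
  have h := (integrable_norm_pow_div_one_add_norm_sq_pow (E := ℝ) volume
    (k := k) (l := l) (by rw [finrank_self]; omega)).integrableOn (s := Ioi 0)
  refine h.congr_fun (fun r (hr : 0 < r) => ?_) measurableSet_Ioi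
  simp only [norm_of_nonneg hr.le]

theorem oneAddSqMoment_add_two_succ {k l : ℕ} (hkl : k + 1 < 2 * l) :
    oneAddSqMoment (k + 2) (l + 1) = oneAddSqMoment k l - oneAddSqMoment k (l + 1) := by
  rw [oneAddSqMoment, oneAddSqMoment, oneAddSqMoment,
    ← integral_sub (integrableOn_pow_div_one_add_sq_pow hkl)
      (integrableOn_pow_div_one_add_sq_pow (by omega))]
  congr 1 with r
  have : (1 + r ^ 2) ≠ 0 := by positivity
  field_simp
  ring

theorem tendsto_pow_div_one_add_sq_pow_atTop {j l : ℕ} (hjl : j < 2 * l) :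
    Tendsto (fun r : ℝ => r ^ j / (1 + r ^ 2) ^ l) atTop (nhds 0) := by
  obtain ⟨i, hi⟩ : ∃ i, 2 * l = j + (i + 1) := ⟨2 * l - j - 1, by omega⟩
  refine squeeze_zero' (eventually_ge_atTop 0 |>.mono fun r hr => by positivity)
    (eventually_gt_atTop 0 |>.mono fun r hr => ?_)
    (tendsto_inv_atTop_zero.comp (tendsto_pow_atTop (Nat.succ_ne_zero i)))
  calc r ^ j / (1 + r ^ 2) ^ l ≤ r ^ j / (r ^ 2) ^ l := by gcongr; linarith
    _ = (r ^ (i + 1))⁻¹ := by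
      rw [← pow_mul, hi, pow_add, div_mul_cancel_left₀ (by positivity), inv_eq_one_div]

theorem oneAddSqMoment_integration_by_parts {k l : ℕ} (hkl : k + 1 < 2 * l) :
    (k + 1) * oneAddSqMoment k l = 2 * l * oneAddSqMoment (k + 2) (l + 1) := by
  set F : ℝ → ℝ := fun r => r ^ (k + 1) / (1 + r ^ 2) ^ l
  have hF : ∀ r ∈ Ioi (0 : ℝ), HasDerivAt F
      ((k + 1) * (r ^ k / (1 + r ^ 2) ^ l) - 2 * l * (r ^ (k + 2) / (1 + r ^ 2) ^ (l + 1))) r := by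
    intro r _
    obtain ⟨j, rfl⟩ : ∃ j, l = j + 1 := ⟨l - 1, by omega⟩
    have hs : (1 + r ^ 2) ≠ 0 := by positivity
    have hnum : HasDerivAt (fun r : ℝ => r ^ (k + 1)) ((k + 1) * r ^ k) r := by
      simpa using hasDerivAt_pow (k + 1) r
    have hden : HasDerivAt (fun r : ℝ => (1 + r ^ 2) ^ (j + 1))
        ((j + 1) * (1 + r ^ 2) ^ j * (2 * r)) r := by
      simpa using ((hasDerivAt_pow 2 r).const_add 1).fun_pow (j + 1)
    refine (hnum.fun_div hden (pow_ne_zero _ hs)).congr_deriv ?_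
    field_simp
    push_cast
    ring
  have hint₁ := (integrableOn_pow_div_one_add_sq_pow hkl).const_mul (k + 1 : ℝ)
  have hint₂ := (integrableOn_pow_div_one_add_sq_pow (k := k + 2) (l := l + 1)
    (by omega)).const_mul (2 * l : ℝ)
  have hIBP := integral_Ioi_of_hasDerivAt_of_tendsto
    (continuous_pow_div_one_add_sq_pow (k + 1) l).continuousWithinAt hF (hint₁.sub hint₂)
    (tendsto_pow_div_one_add_sq_pow_atTop hkl)
  rw [integral_sub hint₁ hint₂, integral_const_mul, integral_const_mul,
    zero_pow (Nat.succ_ne_zero k), zero_div, sub_zero] at hIBP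
  rw [oneAddSqMoment, oneAddSqMoment]
  linarith

theorem oneAddSqMoment_bubble_identity {n : ℕ} (hn : 7 ≤ n) :
    ((n : ℝ) - 2) / 2 * (oneAddSqMoment (n + 3) (n - 1) - oneAddSqMoment (n + 1) (n - 1)) =
      2 * oneAddSqMoment (n + 1) (n - 2) := by
  obtain ⟨l, rfl⟩ : ∃ l, n = l + 2 := ⟨n - 2, by omega⟩
  have hkl : l + 3 + 1 < 2 * l := by omega
  have hrec : oneAddSqMoment (l + 5) (l + 1) =
      oneAddSqMoment (l + 3) l - oneAddSqMoment (l + 3) (l + 1) :=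
    oneAddSqMoment_add_two_succ hkl
  have hibp : (l + 4) * oneAddSqMoment (l + 3) l = 2 * l * oneAddSqMoment (l + 5) (l + 1) := by
    have := oneAddSqMoment_integration_by_parts hkl
    push_cast at this
    linear_combination this
  show ((l + 2 : ℕ) - 2 : ℝ) / 2 * (oneAddSqMoment (l + 5) (l + 1) -
    oneAddSqMoment (l + 3) (l + 1)) = 2 * oneAddSqMoment (l + 3) l
  push_cast
  linear_combination (-1 / 2 : ℝ) * hibp - (l / 2 : ℝ) * hrec

theorem sqrt_div_rpow_s10 {c d : ℝ} (hc : 0 ≤ c) (hd : 0 ≤ d) (a : ℝ) :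
    (√c / d) ^ a = c ^ (a / 2) / d ^ a := by
  rw [div_rpow (sqrt_nonneg c) hd, rpow_div_two_eq_sqrt a hc]

theorem rpow_mul_rpow_of_add_eq_natCast {s : ℝ} (hs : 0 < s) {a b : ℝ} {m : ℕ}
    (h : a + b = m) : s ^ a * s ^ b = s ^ m := by
  rw [← rpow_add hs, h, rpow_natCast]

theorem bubble_mul_Z0 {n : ℕ} (hn : 2 ≤ n) {t : ℝ} (ht : 0 ≤ t) :
    (√((n : ℝ) * ((n : ℝ) - 2)) / (1 + t)) ^ (((n : ℝ) - 2) / 2) *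
      (((n : ℝ) * ((n : ℝ) - 2)) ^ (((n : ℝ) - 2) / 4) * (((n : ℝ) - 2) / 2) *
        ((t - 1) / (1 + t) ^ ((n : ℝ) / 2))) =
      ((n : ℝ) * ((n : ℝ) - 2)) ^ (((n : ℝ) - 2) / 2) * (((n : ℝ) - 2) / 2) *
        ((t - 1) / (1 + t) ^ (n - 1)) := by
  have hn' : (2 : ℝ) ≤ n := by exact_mod_cast hn
  have hc : 0 ≤ (n : ℝ) * ((n : ℝ) - 2) := by nlinarith
  have hs : 0 < 1 + t := by linarith
  have hc2 : (((n : ℝ) * ((n : ℝ) - 2)) ^ (((n : ℝ) - 2) / 4)) ^ 2 =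
      ((n : ℝ) * ((n : ℝ) - 2)) ^ (((n : ℝ) - 2) / 2) := by
    rw [← rpow_mul_natCast hc]
    ring_nf
  have hs2 : (1 + t) ^ (((n : ℝ) - 2) / 2) * (1 + t) ^ ((n : ℝ) / 2) = (1 + t) ^ (n - 1) :=
    rpow_mul_rpow_of_add_eq_natCast hs (by rw [Nat.cast_sub (by omega)]; ring)
  rw [sqrt_div_rpow_s10 hc hs.le, ← hc2, ← hs2, show ((n : ℝ) - 2) / 2 / 2 = ((n : ℝ) - 2) / 4 by ring]
  ring

theorem bubble_sq {n : ℕ} (hn : 2 ≤ n) {t : ℝ} (ht : 0 ≤ t) :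
    ((√((n : ℝ) * ((n : ℝ) - 2)) / (1 + t)) ^ (((n : ℝ) - 2) / 2)) ^ 2 =
      ((n : ℝ) * ((n : ℝ) - 2)) ^ (((n : ℝ) - 2) / 2) / (1 + t) ^ (n - 2) := by
  have hn' : (2 : ℝ) ≤ n := by exact_mod_cast hn
  have hc : 0 ≤ (n : ℝ) * ((n : ℝ) - 2) := by nlinarith
  have hs : 0 < 1 + t := by linarith
  rw [sqrt_div_rpow_s10 hc hs.le, div_pow, ← rpow_mul_natCast hc, ← rpow_mul_natCast hs.le,
    ← rpow_natCast (1 + t) (n - 2), Nat.cast_sub hn]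
  congr 2 <;> push_cast <;> ring

/-- For `n ≥ 7`, with
`Z₀(x) = (n(n−2))^((n−2)/4)·((n−2)/2)·(|x|²−1)/(1+|x|²)^(n/2)`, one has
`∫ |x|²·U_{1,0}·Z₀ dx = 2·∫ |x|²·U_{1,0}² dx`, both integrals being finite. -/
theorem bubble_Z0_weighted_L2_identity (n : ℕ) (hn : 7 ≤ n)
    (U : EuclideanSpace ℝ (Fin n) → ℝ)
    (hU : ∀ x, U x =
      (Real.sqrt ((n : ℝ) * ((n : ℝ) - 2)) / (1 + ‖x‖ ^ 2)) ^ (((n : ℝ) - 2) / 2))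
    (Z₀ : EuclideanSpace ℝ (Fin n) → ℝ)
    (hZ₀ : ∀ x, Z₀ x = ((n : ℝ) * ((n : ℝ) - 2)) ^ (((n : ℝ) - 2) / 4) *
      (((n : ℝ) - 2) / 2) * ((‖x‖ ^ 2 - 1) / (1 + ‖x‖ ^ 2) ^ ((n : ℝ) / 2))) :
    Integrable (fun x => ‖x‖ ^ 2 * (U x * Z₀ x)) ∧
    Integrable (fun x => ‖x‖ ^ 2 * U x ^ 2) ∧
    ∫ x, ‖x‖ ^ 2 * (U x * Z₀ x) = 2 * ∫ x, ‖x‖ ^ 2 * U x ^ 2 := by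
  set c := ((n : ℝ) * ((n : ℝ) - 2)) ^ (((n : ℝ) - 2) / 2)
  have hUZ₀ : (fun x => ‖x‖ ^ 2 * (U x * Z₀ x)) = fun x => c * (((n : ℝ) - 2) / 2) *
      (‖x‖ ^ 4 / (1 + ‖x‖ ^ 2) ^ (n - 1) - ‖x‖ ^ 2 / (1 + ‖x‖ ^ 2) ^ (n - 1)) := by
    ext x
    rw [hU, hZ₀, bubble_mul_Z0 (by omega) (sq_nonneg ‖x‖)]
    ring
  have hUU : (fun x => ‖x‖ ^ 2 * U x ^ 2) = fun x => c * (‖x‖ ^ 2 / (1 + ‖x‖ ^ 2) ^ (n - 2)) := by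
    ext x
    rw [hU, bubble_sq (by omega) (sq_nonneg ‖x‖)]
    ring
  have hdim : finrank ℝ (EuclideanSpace ℝ (Fin n)) = n := finrank_euclideanSpace_fin
  have : Nontrivial (EuclideanSpace ℝ (Fin n)) := nontrivial_of_finrank_pos (by rw [hdim]; omega)
  have hint : ∀ k l, n + k < 2 * l →
      Integrable (fun x : EuclideanSpace ℝ (Fin n) => ‖x‖ ^ k / (1 + ‖x‖ ^ 2) ^ l) :=
    fun k l h => integrable_norm_pow_div_one_add_norm_sq_pow volume (by rwa [hdim])
  have h₄ := hint 4 (n - 1) (by omega)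
  have h₂ := hint 2 (n - 1) (by omega)
  have h₂' := hint 2 (n - 2) (by omega)
  rw [hUZ₀, hUU]
  refine ⟨(h₄.sub h₂).const_mul _, h₂'.const_mul _, ?_⟩
  rw [integral_const_mul, integral_const_mul, integral_sub h₄ h₂,
    integral_norm_pow_div_one_add_norm_sq_pow, integral_norm_pow_div_one_add_norm_sq_pow,
    integral_norm_pow_div_one_add_norm_sq_pow, hdim, show 4 + n - 1 = n + 3 by omega,
    show 2 + n - 1 = n + 1 by omega]
  linear_combination (c * n * volume.real (ball (0 : EuclideanSpace ℝ (Fin n)) 1)) *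
    oneAddSqMoment_bubble_identity hn
end

section
/- Let n ≥ 3, r₀ > 0, α > 0 and p ≥ 1 be real numbers, and for δ > 0 set Ũ_δ(x) = (√(n(n-2))·δ/(δ²+|x|²))^((n-2)/2) for x ∈ ℝⁿ. Then there exists a constant C > 0 such that for all δ ∈ (0, 1/2]: (i) if n > (n−2−α)p then (∫_{B(0,r₀)} (|x|^α·Ũ_δ(x))^p dx)^(1/p) ≤ C·δ^((n−2)/2); (ii) if n = (n−2−α)p then (∫_{B(0,r₀)} (|x|^α·Ũ_δ(x))^p dx)^(1/p) ≤ C·δ^((n−2)/2)·(log(1/δ))^(1/p); (iii) if n < (n−2−α)p then (∫_{B(0,r₀)} (|x|^α·Ũ_δ(x))^p dx)^(1/p) ≤ C·δ^(n/p + α − (n−2)/2). Here B(0,r₀) is the Euclidean ball of radius r₀ centered at the origin and dx is Lebesgue measure. -/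
/-!
In polar coordinates the integral of `(|x|^α Ũ_δ)^p` over `B(0, r₀)` is a constant times
`∫₀^r₀ y^ν (cδ/(δ² + y²))^m dy` with `ν = n - 1 + αp` and `m = (n - 2)p/2`. Split at `y = δ`:
on `(0, δ]` the bubble factor is at most `(c/δ)^m`, which contributes `O(δ^(ν+1-m))`; on `(δ, r₀)`
it is at most `(cδ/y²)^m`, which contributes `δ^m ∫_δ^r₀ y^(ν-2m) dy`. This last integral is
bounded, of size `log(1/δ)`, or of size `δ^(ν+1-2m)` according to the sign of
`ν + 1 - 2m = n - (n - 2 - α)p`, and taking `p`-th roots gives the three regimes.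
-/

open MeasureTheory Real Set Metric

theorem setIntegral_ball_fun_norm_addHaar {E F : Type*} [NormedAddCommGroup E] [NormedSpace ℝ E]
    [FiniteDimensional ℝ E] [Nontrivial E] [MeasurableSpace E] [BorelSpace E]
    [NormedAddCommGroup F] [NormedSpace ℝ F] (μ : Measure E) [μ.IsAddHaarMeasure]
    (f : ℝ → F) (r : ℝ) :
    ∫ x in ball (0 : E) r, f ‖x‖ ∂μ = Module.finrank ℝ E • μ.real (ball 0 1) •
      ∫ y in Ioo 0 r, y ^ (Module.finrank ℝ E - 1) • f y := by
  have hball : (ball (0 : E) r).indicator (fun x => f ‖x‖) = fun x => (Iio r).indicator f ‖x‖ := by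
    ext x
    by_cases hx : ‖x‖ < r <;> simp [indicator, hx]
  rw [← integral_indicator measurableSet_ball, hball, integral_fun_norm_addHaar μ,
    ← indicator_smul, setIntegral_indicator measurableSet_Iio, Ioi_inter_Iio]

theorem setIntegral_ball_norm_rpow_mul_bubble {E : Type*} [NormedAddCommGroup E]
    [NormedSpace ℝ E] [FiniteDimensional ℝ E] [Nontrivial E] [MeasurableSpace E] [BorelSpace E]
    (μ : Measure E) [μ.IsAddHaarMeasure] {α β c δ p r : ℝ} (hc : 0 ≤ c) (hδ : 0 < δ) :
    ∫ x in ball (0 : E) r, (‖x‖ ^ α * (c * δ / (δ ^ 2 + ‖x‖ ^ 2)) ^ β) ^ p ∂μ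
      = Module.finrank ℝ E * μ.real (ball 0 1) *
        ∫ y in Ioo 0 r, y ^ ((Module.finrank ℝ E : ℝ) - 1 + α * p)
          * (c * δ / (δ ^ 2 + y ^ 2)) ^ (β * p) := by
  rw [setIntegral_ball_fun_norm_addHaar μ
    (fun y => (y ^ α * (c * δ / (δ ^ 2 + y ^ 2)) ^ β) ^ p), nsmul_eq_mul, smul_eq_mul,
    ← mul_assoc]
  refine congrArg _ (setIntegral_congr_fun measurableSet_Ioo fun y hy => ?_)
  have hy : 0 < y := hy.1
  rw [smul_eq_mul, mul_rpow (by positivity) (by positivity), ← rpow_mul hy.le,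
    ← rpow_mul (by positivity), ← rpow_natCast, Nat.cast_sub Module.finrank_pos, Nat.cast_one,
    ← mul_assoc, ← rpow_add hy]

theorem continuous_rpow_mul_bubble {ν m δ : ℝ} (c : ℝ) (hν : 0 ≤ ν) (hm : 0 ≤ m) (hδ : δ ≠ 0) :
    Continuous fun y : ℝ => y ^ ν * (c * δ / (δ ^ 2 + y ^ 2)) ^ m :=
  (continuous_rpow_const hν).mul
    ((continuous_const.div (by fun_prop) fun y => by positivity).rpow_const fun _ => Or.inr hm)

theorem setIntegral_Ioc_rpow_mul_bubble_le {ν m c δ : ℝ} (hν : 0 ≤ ν) (hm : 0 ≤ m) (hc : 0 ≤ c)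
    (hδ : 0 < δ) :
    ∫ y in Ioc 0 δ, y ^ ν * (c * δ / (δ ^ 2 + y ^ 2)) ^ m ≤ c ^ m / (ν + 1) * δ ^ (ν + 1 - m) := by
  have hbound : ∀ y ∈ Ioc 0 δ, y ^ ν * (c * δ / (δ ^ 2 + y ^ 2)) ^ m ≤ (c / δ) ^ m * y ^ ν := by
    intro y hy
    have hle : c * δ / (δ ^ 2 + y ^ 2) ≤ c / δ :=
      calc c * δ / (δ ^ 2 + y ^ 2) ≤ c * δ / δ ^ 2 := by gcongr; nlinarith
        _ = c / δ := by field_simp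
    rw [mul_comm]
    exact mul_le_mul_of_nonneg_right (rpow_le_rpow (by positivity) hle hm)
      (rpow_nonneg hy.1.le _)
  calc ∫ y in Ioc 0 δ, y ^ ν * (c * δ / (δ ^ 2 + y ^ 2)) ^ m
      ≤ ∫ y in Ioc 0 δ, (c / δ) ^ m * y ^ ν :=
        setIntegral_mono_on ((continuous_rpow_mul_bubble c hν hm hδ.ne').integrableOn_Ioc)
          (by fun_prop : Continuous fun y : ℝ => (c / δ) ^ m * y ^ ν).integrableOn_Ioc
          measurableSet_Ioc hbound
    _ = (c / δ) ^ m * (δ ^ (ν + 1) / (ν + 1)) := by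
        rw [integral_const_mul, ← intervalIntegral.integral_of_le hδ.le,
          integral_rpow (Or.inl (by linarith)), zero_rpow (by positivity), sub_zero]
    _ = c ^ m / (ν + 1) * δ ^ (ν + 1 - m) := by
        rw [div_rpow hc hδ.le, rpow_sub hδ]
        ring

theorem setIntegral_Ioo_rpow_mul_bubble_le {ν m c δ r : ℝ} (hν : 0 ≤ ν) (hm : 0 ≤ m)
    (hc : 0 ≤ c) (hδ : 0 < δ) :
    ∫ y in Ioo δ r, y ^ ν * (c * δ / (δ ^ 2 + y ^ 2)) ^ m
      ≤ c ^ m * δ ^ m * ∫ y in Ioo δ r, y ^ (ν - 2 * m) := by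
  have hbound : ∀ y ∈ Ioo δ r,
      y ^ ν * (c * δ / (δ ^ 2 + y ^ 2)) ^ m ≤ c ^ m * δ ^ m * y ^ (ν - 2 * m) := by
    intro y hy
    have hy : 0 < y := hδ.trans hy.1
    calc y ^ ν * (c * δ / (δ ^ 2 + y ^ 2)) ^ m ≤ y ^ ν * (c * δ / y ^ 2) ^ m := by
          have hle : c * δ / (δ ^ 2 + y ^ 2) ≤ c * δ / y ^ 2 := by gcongr; nlinarith
          exact mul_le_mul_of_nonneg_left (rpow_le_rpow (by positivity) hle hm)
            (rpow_nonneg hy.le _)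
      _ = c ^ m * δ ^ m * y ^ (ν - 2 * m) := by
          rw [div_rpow (by positivity) (by positivity), mul_rpow hc hδ.le, rpow_sub hy,
            rpow_mul hy.le, rpow_two]
          ring
  have hint : IntegrableOn (fun y : ℝ => y ^ (ν - 2 * m)) (Ioo δ r) :=
    (ContinuousOn.integrableOn_Icc (fun y hy => (continuousAt_rpow_const y _
      (Or.inl (hδ.trans_le hy.1).ne')).continuousWithinAt)).mono_set Ioo_subset_Icc_self
  rw [← integral_const_mul]
  exact setIntegral_mono_on
    ((continuous_rpow_mul_bubble c hν hm hδ.ne').integrableOn_Icc.mono_set Ioo_subset_Icc_self)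
    (hint.const_mul _) measurableSet_Ioo hbound

theorem setIntegral_Ioo_zero_rpow_mul_bubble_le {ν m c δ r : ℝ} (hν : 0 ≤ ν) (hm : 0 ≤ m)
    (hc : 0 ≤ c) (hδ : 0 < δ) :
    ∫ y in Ioo 0 r, y ^ ν * (c * δ / (δ ^ 2 + y ^ 2)) ^ m
      ≤ c ^ m / (ν + 1) * δ ^ (ν + 1 - m) + c ^ m * δ ^ m * ∫ y in Ioo δ r, y ^ (ν - 2 * m) := by
  have hcont := continuous_rpow_mul_bubble c hν hm hδ.ne'
  have hsub : Ioc 0 δ ∪ Ioo δ r ⊆ Icc 0 (max δ r) := by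
    rintro y (hy | hy)
    · exact ⟨hy.1.le, hy.2.trans (le_max_left _ _)⟩
    · exact ⟨hδ.le.trans hy.1.le, hy.2.le.trans (le_max_right _ _)⟩
  calc ∫ y in Ioo 0 r, y ^ ν * (c * δ / (δ ^ 2 + y ^ 2)) ^ m
      ≤ ∫ y in Ioc 0 δ ∪ Ioo δ r, y ^ ν * (c * δ / (δ ^ 2 + y ^ 2)) ^ m := by
        refine setIntegral_mono_set (hcont.integrableOn_Icc.mono_set hsub) ?_
          (Ioo_subset_Ioc_union_Ioo.eventuallyLE)
        refine (ae_restrict_iff' (measurableSet_Ioc.union measurableSet_Ioo)).2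
          (.of_forall fun y hy => ?_)
        have : 0 ≤ y := (hsub hy).1
        positivity
    _ = (∫ y in Ioc 0 δ, y ^ ν * (c * δ / (δ ^ 2 + y ^ 2)) ^ m)
          + ∫ y in Ioo δ r, y ^ ν * (c * δ / (δ ^ 2 + y ^ 2)) ^ m :=
        setIntegral_union (Ioc_disjoint_Ioi_same.mono_right Ioo_subset_Ioi_self) measurableSet_Ioo
          hcont.integrableOn_Ioc (hcont.integrableOn_Icc.mono_set Ioo_subset_Icc_self)
    _ ≤ _ := add_le_add (setIntegral_Ioc_rpow_mul_bubble_le hν hm hc hδ)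
          (setIntegral_Ioo_rpow_mul_bubble_le hν hm hc hδ)

section PowerIntegrals

variable {a b s : ℝ}

theorem setIntegral_Ioo_rpow (ha : 0 < a) (hab : a ≤ b) (hs : s ≠ -1) :
    ∫ y in Ioo a b, y ^ s = (b ^ (s + 1) - a ^ (s + 1)) / (s + 1) := by
  rw [← integral_Ioc_eq_integral_Ioo, ← intervalIntegral.integral_of_le hab,
    integral_rpow (Or.inr ⟨hs, notMem_uIcc_of_lt ha (ha.trans_le hab)⟩)]

theorem setIntegral_Ioo_rpow_le_of_neg_one_lt (ha : 0 < a) (hb : 0 ≤ b) (hs : -1 < s) :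
    ∫ y in Ioo a b, y ^ s ≤ b ^ (s + 1) / (s + 1) := by
  rcases le_or_gt a b with hab | hba
  · rw [setIntegral_Ioo_rpow ha hab hs.ne']
    have : 0 ≤ a ^ (s + 1) := rpow_nonneg ha.le _
    gcongr
    · linarith
    · linarith
  · rw [Ioo_eq_empty hba.not_gt, setIntegral_empty]
    have : 0 < s + 1 := by linarith
    positivity

theorem setIntegral_Ioo_rpow_le_of_lt_neg_one (ha : 0 < a) (hs : s < -1) :
    ∫ y in Ioo a b, y ^ s ≤ a ^ (s + 1) / -(s + 1) := by
  rcases le_or_gt a b with hab | hba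
  · rw [setIntegral_Ioo_rpow ha hab hs.ne, ← neg_div_neg_eq, neg_sub]
    have : 0 ≤ b ^ (s + 1) := rpow_nonneg (ha.le.trans hab) _
    gcongr
    · linarith
    · linarith
  · rw [Ioo_eq_empty hba.not_gt, setIntegral_empty]
    have : 0 < -(s + 1) := by linarith
    positivity

theorem setIntegral_Ioo_rpow_neg_one_le (ha : 0 < a) :
    ∫ y in Ioo a b, y ^ (-1 : ℝ) ≤ |log b| + |log a| := by
  rcases le_or_gt a b with hab | hba
  · simp_rw [rpow_neg_one]
    rw [← integral_Ioc_eq_integral_Ioo, ← intervalIntegral.integral_of_le hab,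
      integral_inv_of_pos ha (ha.trans_le hab), log_div (ha.trans_le hab).ne' ha.ne']
    linarith [le_abs_self (log b), neg_abs_le (log a)]
  · rw [Ioo_eq_empty hba.not_gt, setIntegral_empty]
    positivity

end PowerIntegrals

section Regimes

variable {ν m c r δ : ℝ}

theorem setIntegral_rpow_mul_bubble_le_of_pos (hν : 0 ≤ ν) (hm : 0 ≤ m) (hc : 0 ≤ c)
    (hr : 0 ≤ r) (hδ : 0 < δ) (hδ₁ : δ ≤ 1) (hκ : 0 < ν + 1 - 2 * m) :
    ∫ y in Ioo 0 r, y ^ ν * (c * δ / (δ ^ 2 + y ^ 2)) ^ m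
      ≤ (c ^ m / (ν + 1) + c ^ m * (r ^ (ν + 1 - 2 * m) / (ν + 1 - 2 * m))) * δ ^ m := by
  have hinner : δ ^ (ν + 1 - m) ≤ δ ^ m := rpow_le_rpow_of_exponent_ge hδ hδ₁ (by linarith)
  have houter := setIntegral_Ioo_rpow_le_of_neg_one_lt hδ hr (s := ν - 2 * m) (by linarith)
  rw [show ν - 2 * m + 1 = ν + 1 - 2 * m by ring] at houter
  have : 0 ≤ c ^ m := rpow_nonneg hc _
  calc _ ≤ c ^ m / (ν + 1) * δ ^ (ν + 1 - m) + c ^ m * δ ^ m * ∫ y in Ioo δ r, y ^ (ν - 2 * m) :=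
        setIntegral_Ioo_zero_rpow_mul_bubble_le hν hm hc hδ
    _ ≤ c ^ m / (ν + 1) * δ ^ m + c ^ m * δ ^ m * (r ^ (ν + 1 - 2 * m) / (ν + 1 - 2 * m)) := by
        gcongr
    _ = _ := by ring

theorem setIntegral_rpow_mul_bubble_le_of_neg (hν : 0 ≤ ν) (hm : 0 ≤ m) (hc : 0 ≤ c)
    (hδ : 0 < δ) (hκ : ν + 1 - 2 * m < 0) :
    ∫ y in Ioo 0 r, y ^ ν * (c * δ / (δ ^ 2 + y ^ 2)) ^ m
      ≤ (c ^ m / (ν + 1) + c ^ m / -(ν + 1 - 2 * m)) * δ ^ (ν + 1 - m) := by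
  have houter := setIntegral_Ioo_rpow_le_of_lt_neg_one hδ (b := r) (s := ν - 2 * m) (by linarith)
  rw [show ν - 2 * m + 1 = ν + 1 - 2 * m by ring] at houter
  have : 0 ≤ c ^ m := rpow_nonneg hc _
  calc _ ≤ c ^ m / (ν + 1) * δ ^ (ν + 1 - m) + c ^ m * δ ^ m * ∫ y in Ioo δ r, y ^ (ν - 2 * m) :=
        setIntegral_Ioo_zero_rpow_mul_bubble_le hν hm hc hδ
    _ ≤ c ^ m / (ν + 1) * δ ^ (ν + 1 - m)
          + c ^ m * δ ^ m * (δ ^ (ν + 1 - 2 * m) / -(ν + 1 - 2 * m)) := by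
        gcongr
    _ = _ := by
        rw [show ν + 1 - m = m + (ν + 1 - 2 * m) by ring, rpow_add hδ]
        ring

theorem setIntegral_rpow_mul_bubble_le_of_eq_zero (hν : 0 ≤ ν) (hm : 0 ≤ m) (hc : 0 ≤ c)
    (hδ : 0 < δ) (hδ₂ : δ ≤ 1 / 2) (hκ : ν + 1 - 2 * m = 0) :
    ∫ y in Ioo 0 r, y ^ ν * (c * δ / (δ ^ 2 + y ^ 2)) ^ m
      ≤ ((c ^ m / (ν + 1) + c ^ m * |log r|) / log 2 + c ^ m) * δ ^ m * log (1 / δ) := by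
  have houter := setIntegral_Ioo_rpow_neg_one_le hδ (b := r)
  rw [show (-1 : ℝ) = ν - 2 * m by linarith, abs_of_neg (log_neg hδ (by linarith)),
    ← log_inv, ← one_div] at houter
  have hlog2 : 0 < log 2 := log_pos one_lt_two
  have hlog : log 2 ≤ log (1 / δ) :=
    log_le_log two_pos (by rw [le_one_div two_pos hδ]; linarith)
  have : 0 ≤ c ^ m := rpow_nonneg hc _
  have : 0 < δ ^ m := rpow_pos_of_pos hδ _
  calc _ ≤ c ^ m / (ν + 1) * δ ^ (ν + 1 - m) + c ^ m * δ ^ m * ∫ y in Ioo δ r, y ^ (ν - 2 * m) :=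
        setIntegral_Ioo_zero_rpow_mul_bubble_le hν hm hc hδ
    _ ≤ c ^ m / (ν + 1) * δ ^ m + c ^ m * δ ^ m * (|log r| + log (1 / δ)) := by
        rw [show ν + 1 - m = m by linarith]
        gcongr
    _ = (c ^ m / (ν + 1) + c ^ m * |log r|) * δ ^ m + c ^ m * δ ^ m * log (1 / δ) := by ring
    _ ≤ (c ^ m / (ν + 1) + c ^ m * |log r|) / log 2 * log (1 / δ) * δ ^ m
          + c ^ m * δ ^ m * log (1 / δ) := by
        gcongr
        rw [div_mul_eq_mul_div, le_div_iff₀ hlog2]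
        gcongr
    _ = _ := by ring

end Regimes

theorem exists_setIntegral_rpow_mul_bubble_le {ν m c r : ℝ} (hν : 0 ≤ ν) (hm : 0 ≤ m)
    (hc : 0 ≤ c) (hr : 0 ≤ r) :
    ∃ K ≥ (0 : ℝ), ∀ δ : ℝ, 0 < δ → δ ≤ 1 / 2 →
      (0 < ν + 1 - 2 * m →
        ∫ y in Ioo 0 r, y ^ ν * (c * δ / (δ ^ 2 + y ^ 2)) ^ m ≤ K * δ ^ m) ∧
      (ν + 1 - 2 * m = 0 →
        ∫ y in Ioo 0 r, y ^ ν * (c * δ / (δ ^ 2 + y ^ 2)) ^ m ≤ K * δ ^ m * log (1 / δ)) ∧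
      (ν + 1 - 2 * m < 0 →
        ∫ y in Ioo 0 r, y ^ ν * (c * δ / (δ ^ 2 + y ^ 2)) ^ m ≤ K * δ ^ (ν + 1 - m)) := by
  have : 0 ≤ c ^ m := rpow_nonneg hc _
  rcases lt_trichotomy (ν + 1 - 2 * m) 0 with hκ | hκ | hκ
  · have : 0 < -(ν + 1 - 2 * m) := by linarith
    refine ⟨_, by positivity, fun δ hδ _ => ⟨fun h => absurd h hκ.not_gt, fun h => absurd h hκ.ne,
      fun _ => setIntegral_rpow_mul_bubble_le_of_neg hν hm hc hδ hκ⟩⟩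
  · refine ⟨_, by positivity, fun δ hδ hδ₂ => ⟨fun h => absurd hκ h.ne', fun _ =>
      setIntegral_rpow_mul_bubble_le_of_eq_zero hν hm hc hδ hδ₂ hκ, fun h => absurd hκ h.ne⟩⟩
  · refine ⟨_, by positivity, fun δ hδ hδ₂ => ⟨fun _ => setIntegral_rpow_mul_bubble_le_of_pos
      hν hm hc hr hδ (by linarith) hκ, fun h => absurd h hκ.ne', fun h => absurd h hκ.not_gt⟩⟩

theorem rpow_le_add_one_mul_rpow_of_le_mul {x K t q : ℝ} (hx : 0 ≤ x) (hK : 0 ≤ K) (ht : 0 ≤ t)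
    (hq : 0 ≤ q) (h : x ≤ K * t) : x ^ q ≤ (K ^ q + 1) * t ^ q :=
  calc x ^ q ≤ (K * t) ^ q := rpow_le_rpow hx h hq
    _ = K ^ q * t ^ q := mul_rpow hK ht
    _ ≤ (K ^ q + 1) * t ^ q := by gcongr; linarith

/-- For `n ≥ 3`, `r₀ > 0`, `α > 0`, `p ≥ 1` and the bubble
profile `Ũ_δ(x) = (√(n(n-2))·δ/(δ²+|x|²))^((n-2)/2)`, there is `C > 0` such
that for all `0 < δ ≤ 1/2` the weighted `Lᵖ`-norm
`‖ |x|^α·Ũ_δ ‖_{Lᵖ(B(0,r₀))}` is bounded by `C·δ^((n−2)/2)` if `n > (n−2−α)p`,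
by `C·δ^((n−2)/2)·(log(1/δ))^(1/p)` if `n = (n−2−α)p`, and by
`C·δ^(n/p+α−(n−2)/2)` if `n < (n−2−α)p`. -/
theorem bubble_weighted_Lp_estimates (n : ℕ) (hn : 3 ≤ n)
    (r₀ α p : ℝ) (hr₀ : 0 < r₀) (hα : 0 < α) (hp : 1 ≤ p)
    (Ut : ℝ → EuclideanSpace ℝ (Fin n) → ℝ)
    (hUt : ∀ δ x, Ut δ x =
      (Real.sqrt ((n : ℝ) * ((n : ℝ) - 2)) * δ / (δ ^ 2 + ‖x‖ ^ 2))
        ^ (((n : ℝ) - 2) / 2)) :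
    ∃ C > (0 : ℝ), ∀ δ : ℝ, 0 < δ → δ ≤ 1 / 2 →
      (((n : ℝ) > ((n : ℝ) - 2 - α) * p →
        (∫ x in Metric.ball (0 : EuclideanSpace ℝ (Fin n)) r₀,
          (‖x‖ ^ α * Ut δ x) ^ p) ^ (1 / p)
          ≤ C * δ ^ (((n : ℝ) - 2) / 2)) ∧
      ((n : ℝ) = ((n : ℝ) - 2 - α) * p →
        (∫ x in Metric.ball (0 : EuclideanSpace ℝ (Fin n)) r₀,
          (‖x‖ ^ α * Ut δ x) ^ p) ^ (1 / p)
          ≤ C * δ ^ (((n : ℝ) - 2) / 2) * Real.log (1 / δ) ^ (1 / p)) ∧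
      ((n : ℝ) < ((n : ℝ) - 2 - α) * p →
        (∫ x in Metric.ball (0 : EuclideanSpace ℝ (Fin n)) r₀,
          (‖x‖ ^ α * Ut δ x) ^ p) ^ (1 / p)
          ≤ C * δ ^ ((n : ℝ) / p + α - ((n : ℝ) - 2) / 2))) := by
  have : Nonempty (Fin n) := ⟨⟨0, by omega⟩⟩
  have hn₃ : (3 : ℝ) ≤ n := by exact_mod_cast hn
  have hp₀ : 0 < p := by linarith
  set c := √((n : ℝ) * ((n : ℝ) - 2))
  set ν := (n : ℝ) - 1 + α * p
  set m := ((n : ℝ) - 2) / 2 * p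
  set A := (n : ℝ) * volume.real (ball (0 : EuclideanSpace ℝ (Fin n)) 1)
  obtain ⟨K, hK, hI⟩ := exists_setIntegral_rpow_mul_bubble_le (ν := ν) (m := m) (c := c)
    (by nlinarith [mul_pos hα hp₀]) (mul_nonneg (by linarith) hp₀.le) (by positivity) hr₀.le
  have hbound : ∀ δ, 0 < δ → ∀ t, 0 ≤ t →
      ∫ y in Ioo 0 r₀, y ^ ν * (c * δ / (δ ^ 2 + y ^ 2)) ^ m ≤ K * t →
      (∫ x in ball (0 : EuclideanSpace ℝ (Fin n)) r₀, (‖x‖ ^ α * Ut δ x) ^ p) ^ (1 / p)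
        ≤ ((A * K) ^ (1 / p) + 1) * t ^ (1 / p) := by
    intro δ hδ t ht h
    have hI₀ : 0 ≤ ∫ y in Ioo 0 r₀, y ^ ν * (c * δ / (δ ^ 2 + y ^ 2)) ^ m :=
      setIntegral_nonneg measurableSet_Ioo fun y hy => by have := hy.1; positivity
    simp_rw [hUt]
    rw [setIntegral_ball_norm_rpow_mul_bubble volume (by positivity) hδ, finrank_euclideanSpace_fin]
    exact rpow_le_add_one_mul_rpow_of_le_mul (by positivity) (by positivity) ht (by positivity)
      ((mul_le_mul_of_nonneg_left h (by positivity)).trans_eq (mul_assoc _ _ _).symm)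
  have hκ : ν + 1 - 2 * m = n - (n - 2 - α) * p := by ring
  have hm : m * (1 / p) = (n - 2) / 2 := by simp only [m]; field_simp
  have hνm : (ν + 1 - m) * (1 / p) = n / p + α - (n - 2) / 2 := by
    simp only [ν, m]; field_simp; ring
  refine ⟨(A * K) ^ (1 / p) + 1, by positivity, fun δ hδ hδ₂ =>
    ⟨fun h => ?_, fun h => ?_, fun h => ?_⟩⟩
  · calc _ ≤ _ := hbound δ hδ (δ ^ m) (by positivity) ((hI δ hδ hδ₂).1 (by linarith))
      _ = _ := by rw [← rpow_mul hδ.le, hm]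
  · have hlog : 0 ≤ log (1 / δ) := log_nonneg (by rw [le_one_div one_pos hδ]; linarith)
    calc _ ≤ _ := hbound δ hδ (δ ^ m * log (1 / δ)) (by positivity)
          (((hI δ hδ hδ₂).2.1 (by linarith)).trans_eq (mul_assoc _ _ _))
      _ = _ := by rw [mul_rpow (by positivity) hlog, ← rpow_mul hδ.le, hm, ← mul_assoc]
  · calc _ ≤ _ := hbound δ hδ (δ ^ (ν + 1 - m)) (by positivity)
          ((hI δ hδ hδ₂).2.2 (by linarith))
      _ = _ := by rw [← rpow_mul hδ.le, hνm]
end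

section
/- Let n ≥ 7 and r₀ > 0. Then there exists a constant C > 0 such that for all δ ∈ (0,1], the following estimate holds: |∫_{B(0,r₀)} |x|²·U_{δ,0}(x)² dx − δ⁴·∫_{ℝⁿ} |x|²·U_{1,0}(x)² dx| ≤ C·δ⁵, where B(0,r₀) is the Euclidean ball of radius r₀ centered at the origin. -/
/-!
The substitution `x = δ y` shows that `|x|² U_δ(x)²` integrates over all of `ℝⁿ` to exactly
`δ⁴ ∫ |y|² U_1(y)² dy`, so the error is the integral over the complement of the ball, which is
nonnegative. For `|x| ≥ r₀` the base of `U_δ` is at most `C δ / (1 + |x|²)`, hence the integrand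
is at most `C δ^(n-2) (1 + |x|²)^(3-n)`, which is integrable precisely when `n ≥ 7`; finally
`δ^(n-2) ≤ δ⁵` for `δ ≤ 1`.
-/

open MeasureTheory Real Module

-- `U_{δ,0}(x) = bubbleProfile √(n(n-2)) ((n-2)/2) δ ‖x‖`
noncomputable def bubbleProfile (c e δ t : ℝ) : ℝ := (c * δ / (δ ^ 2 + t ^ 2)) ^ e

section Profile

variable {c e δ t : ℝ}

lemma bubbleProfile_one_div (hc : 0 ≤ c) (hδ : 0 < δ) :
    bubbleProfile c e 1 (t / δ) = δ ^ e * bubbleProfile c e δ t := by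
  have hbase : c * 1 / (1 ^ 2 + (t / δ) ^ 2) = δ * (c * δ / (δ ^ 2 + t ^ 2)) := by
    field_simp
  rw [bubbleProfile, bubbleProfile, hbase, mul_rpow hδ.le (by positivity)]

lemma sq_mul_bubbleProfile_sq_eq (hc : 0 ≤ c) (hδ : 0 < δ) :
    t ^ 2 * bubbleProfile c e δ t ^ 2
      = δ ^ (2 - 2 * e) * ((t / δ) ^ 2 * bubbleProfile c e 1 (t / δ) ^ 2) := by
  have hδe : δ ^ (2 - 2 * e) * (δ ^ e) ^ 2 = δ ^ 2 := by
    rw [← rpow_natCast, ← rpow_mul hδ.le, ← rpow_add hδ, ← rpow_two]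
    ring_nf
  rw [bubbleProfile_one_div hc hδ, div_pow, mul_pow,
    show δ ^ (2 - 2 * e) * (t ^ 2 / δ ^ 2 * ((δ ^ e) ^ 2 * bubbleProfile c e δ t ^ 2))
      = δ ^ (2 - 2 * e) * (δ ^ e) ^ 2 * (t ^ 2 * bubbleProfile c e δ t ^ 2) / δ ^ 2 by ring,
    hδe]
  field_simp

lemma sq_mul_rpow_sq_le {a K : ℝ} (he : 0 ≤ e) (ha : 0 ≤ a) (haK : a ≤ K / (1 + t ^ 2)) :
    t ^ 2 * (a ^ e) ^ 2 ≤ K ^ (2 * e) * (1 + t ^ 2) ^ (1 - 2 * e) := by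
  have ht : 0 < 1 + t ^ 2 := by positivity
  have hK : 0 ≤ K := by simpa using (le_div_iff₀ ht).mp (ha.trans haK)
  have hpow : (a ^ e) ^ 2 ≤ K ^ (2 * e) / (1 + t ^ 2) ^ (2 * e) := by
    rw [← rpow_natCast, ← rpow_mul ha, ← div_rpow hK ht.le, mul_comm]
    exact rpow_le_rpow ha (by exact_mod_cast haK) (by positivity)
  calc t ^ 2 * (a ^ e) ^ 2 ≤ (1 + t ^ 2) * (K ^ (2 * e) / (1 + t ^ 2) ^ (2 * e)) :=
        mul_le_mul (by linarith) hpow (by positivity) ht.le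
    _ = K ^ (2 * e) * (1 + t ^ 2) ^ (1 - 2 * e) := by
        rw [rpow_sub ht, rpow_one]; ring

lemma sq_mul_bubbleProfile_one_sq_le (hc : 0 ≤ c) (he : 0 ≤ e) :
    t ^ 2 * bubbleProfile c e 1 t ^ 2 ≤ c ^ (2 * e) * (1 + t ^ 2) ^ (1 - 2 * e) :=
  sq_mul_rpow_sq_le he (by positivity) (by norm_num)

lemma sq_mul_bubbleProfile_sq_le_of_le {r : ℝ} (hc : 0 ≤ c) (he : 0 ≤ e) (hδ : 0 ≤ δ)
    (hr : 0 < r) (hrt : r ≤ t) :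
    t ^ 2 * bubbleProfile c e δ t ^ 2
      ≤ (c * (1 + (r ^ 2)⁻¹) * δ) ^ (2 * e) * (1 + t ^ 2) ^ (1 - 2 * e) := by
  refine sq_mul_rpow_sq_le he (by positivity) ?_
  have hrt2 : 1 ≤ (r ^ 2)⁻¹ * t ^ 2 := by
    rw [inv_mul_eq_div, one_le_div (by positivity)]
    exact pow_le_pow_left₀ hr.le hrt 2
  have ht : 0 < t := hr.trans_le hrt
  rw [div_le_div_iff₀ (by positivity) (by positivity)]
  have : 1 + t ^ 2 ≤ (1 + (r ^ 2)⁻¹) * (δ ^ 2 + t ^ 2) := by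
    nlinarith [sq_nonneg δ, mul_nonneg (inv_nonneg.2 (sq_nonneg r)) (sq_nonneg δ)]
  calc c * δ * (1 + t ^ 2) ≤ c * δ * ((1 + (r ^ 2)⁻¹) * (δ ^ 2 + t ^ 2)) := by gcongr
    _ = _ := by ring

end Profile

section Space

variable {E : Type*} [NormedAddCommGroup E] {c e δ : ℝ}

noncomputable def weightedBubbleSq (c e δ : ℝ) (x : E) : ℝ :=
  ‖x‖ ^ 2 * bubbleProfile c e δ ‖x‖ ^ 2

lemma weightedBubbleSq_nonneg (x : E) : 0 ≤ weightedBubbleSq c e δ x := by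
  unfold weightedBubbleSq; positivity

lemma weightedBubbleSq_eq_mul_comp_inv_smul [NormedSpace ℝ E] (hc : 0 ≤ c) (hδ : 0 < δ)
    (x : E) :
    weightedBubbleSq c e δ x = δ ^ (2 - 2 * e) * weightedBubbleSq c e 1 (δ⁻¹ • x) := by
  rw [weightedBubbleSq, weightedBubbleSq, norm_smul, norm_inv, norm_of_nonneg hδ.le,
    inv_mul_eq_div, sq_mul_bubbleProfile_sq_eq hc hδ]

variable [NormedSpace ℝ E] [FiniteDimensional ℝ E] [MeasurableSpace E] [BorelSpace E]
  (μ : Measure E) [μ.IsAddHaarMeasure]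

lemma integrable_one_add_norm_sq_rpow (he : finrank ℝ E + 2 < 4 * e) :
    Integrable (fun x : E ↦ (1 + ‖x‖ ^ 2) ^ (1 - 2 * e)) μ := by
  have h := integrable_rpow_neg_one_add_norm_sq (μ := μ) (r := 4 * e - 2) (by linarith)
  rwa [show -(4 * e - 2) / 2 = 1 - 2 * e by ring] at h

lemma integrable_weightedBubbleSq_one (hc : 0 ≤ c) (he : finrank ℝ E + 2 < 4 * e) :
    Integrable (weightedBubbleSq c e 1) μ := by
  have he0 : 0 ≤ e := by linarith [(finrank ℝ E).cast_nonneg (α := ℝ)]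
  refine ((integrable_one_add_norm_sq_rpow μ he).const_mul (c ^ (2 * e))).mono' ?_
    (.of_forall fun x ↦ ?_)
  · exact Measurable.aestronglyMeasurable (by unfold weightedBubbleSq bubbleProfile; fun_prop)
  · rw [norm_of_nonneg (weightedBubbleSq_nonneg x)]
    exact sq_mul_bubbleProfile_one_sq_le hc he0

lemma integrable_weightedBubbleSq (hc : 0 ≤ c) (he : finrank ℝ E + 2 < 4 * e) (hδ : 0 < δ) :
    Integrable (weightedBubbleSq c e δ) μ := by
  simp_rw [funext (weightedBubbleSq_eq_mul_comp_inv_smul (E := E) hc hδ)]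
  exact ((integrable_weightedBubbleSq_one μ hc he).comp_smul (inv_ne_zero hδ.ne')).const_mul _

lemma integral_weightedBubbleSq (hc : 0 ≤ c) (hδ : 0 < δ) :
    ∫ x, weightedBubbleSq c e δ x ∂μ
      = δ ^ (2 - 2 * e + finrank ℝ E) * ∫ x, weightedBubbleSq c e 1 x ∂μ := by
  simp_rw [weightedBubbleSq_eq_mul_comp_inv_smul hc hδ, integral_const_mul,
    Measure.integral_comp_inv_smul_of_nonneg μ _ hδ.le, smul_eq_mul, ← mul_assoc,
    rpow_add hδ, rpow_natCast]

lemma setIntegral_compl_ball_weightedBubbleSq_le {r : ℝ} (hc : 0 ≤ c)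
    (he : finrank ℝ E + 2 < 4 * e) (hδ : 0 < δ) (hr : 0 < r) :
    ∫ x in (Metric.ball 0 r)ᶜ, weightedBubbleSq c e δ x ∂μ
      ≤ (c * (1 + (r ^ 2)⁻¹) * δ) ^ (2 * e) * ∫ x, (1 + ‖x‖ ^ 2) ^ (1 - 2 * e) ∂μ := by
  have he0 : 0 ≤ e := by linarith [(finrank ℝ E).cast_nonneg (α := ℝ)]
  have hmajorant := integrable_one_add_norm_sq_rpow μ he
  rw [← integral_const_mul]
  calc ∫ x in (Metric.ball 0 r)ᶜ, weightedBubbleSq c e δ x ∂μ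
      ≤ ∫ x in (Metric.ball 0 r)ᶜ, (c * (1 + (r ^ 2)⁻¹) * δ) ^ (2 * e)
          * (1 + ‖x‖ ^ 2) ^ (1 - 2 * e) ∂μ := by
        refine setIntegral_mono_on (integrable_weightedBubbleSq μ hc he hδ).integrableOn
          (hmajorant.const_mul _).integrableOn Metric.isOpen_ball.measurableSet.compl
          fun x hx ↦ ?_
        simp only [Set.mem_compl_iff, Metric.mem_ball, dist_zero_right, not_lt] at hx
        exact sq_mul_bubbleProfile_sq_le_of_le hc he0 hδ.le hr hx
    _ ≤ _ := setIntegral_le_integral (hmajorant.const_mul _)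
        (.of_forall fun x ↦ by positivity)

lemma abs_setIntegral_ball_weightedBubbleSq_sub_le {r : ℝ} (hc : 0 ≤ c)
    (he : finrank ℝ E + 2 < 4 * e) (hδ : 0 < δ) (hr : 0 < r) :
    |∫ x in Metric.ball 0 r, weightedBubbleSq c e δ x ∂μ
        - δ ^ (2 - 2 * e + finrank ℝ E) * ∫ x, weightedBubbleSq c e 1 x ∂μ|
      ≤ (c * (1 + (r ^ 2)⁻¹) * δ) ^ (2 * e) * ∫ x, (1 + ‖x‖ ^ 2) ^ (1 - 2 * e) ∂μ := by
  have hsplit := integral_add_compl (μ := μ)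
    (Metric.isOpen_ball (x := (0 : E)) (ε := r)).measurableSet
    (integrable_weightedBubbleSq μ hc he hδ)
  rw [← integral_weightedBubbleSq μ hc hδ, ← hsplit, sub_add_cancel_left, abs_neg,
    abs_of_nonneg (setIntegral_nonneg Metric.isOpen_ball.measurableSet.compl
      fun x _ ↦ weightedBubbleSq_nonneg x)]
  exact setIntegral_compl_ball_weightedBubbleSq_le μ hc he hδ hr

end Space

/-- For `n ≥ 7` and `r₀ > 0` there is `C > 0` such that for
all `0 < δ ≤ 1`:
`|∫_{B(0,r₀)} |x|²·U_{δ,0}² dx − δ⁴·∫_{ℝⁿ} |x|²·U_{1,0}² dx| ≤ C·δ⁵`. -/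
theorem bubble_weighted_L2_ball_estimate (n : ℕ) (hn : 7 ≤ n)
    (r₀ : ℝ) (hr₀ : 0 < r₀)
    (U : EuclideanSpace ℝ (Fin n) → ℝ)
    (hU : ∀ x, U x =
      (Real.sqrt ((n : ℝ) * ((n : ℝ) - 2)) / (1 + ‖x‖ ^ 2)) ^ (((n : ℝ) - 2) / 2))
    (Ub : ℝ → EuclideanSpace ℝ (Fin n) → ℝ)
    (hUb : ∀ δ x, Ub δ x =
      (Real.sqrt ((n : ℝ) * ((n : ℝ) - 2)) * δ / (δ ^ 2 + ‖x‖ ^ 2))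
        ^ (((n : ℝ) - 2) / 2)) :
    ∃ C > (0 : ℝ), ∀ δ : ℝ, 0 < δ → δ ≤ 1 →
      |(∫ x in Metric.ball (0 : EuclideanSpace ℝ (Fin n)) r₀, ‖x‖ ^ 2 * Ub δ x ^ 2)
        - δ ^ 4 * ∫ x, ‖x‖ ^ 2 * U x ^ 2| ≤ C * δ ^ 5 := by
  set c := √((n : ℝ) * ((n : ℝ) - 2))
  set e := ((n : ℝ) - 2) / 2
  have hn' : (7 : ℝ) ≤ n := by exact_mod_cast hn
  have hc : 0 ≤ c := sqrt_nonneg _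
  have h2e : 2 * e = n - 2 := by ring
  have he : finrank ℝ (EuclideanSpace ℝ (Fin n)) + 2 < 4 * e := by
    rw [finrank_euclideanSpace_fin]; linarith
  have hUb' : ∀ δ, (fun x ↦ ‖x‖ ^ 2 * Ub δ x ^ 2) = weightedBubbleSq c e δ := fun δ ↦
    funext fun x ↦ by rw [hUb]; rfl
  have hU' : (fun x ↦ ‖x‖ ^ 2 * U x ^ 2) = weightedBubbleSq c e 1 :=
    funext fun x ↦ by rw [hU, weightedBubbleSq, bubbleProfile]; norm_num
  set A := (c * (1 + (r₀ ^ 2)⁻¹)) ^ (2 * e)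
  set I := ∫ x : EuclideanSpace ℝ (Fin n), (1 + ‖x‖ ^ 2) ^ (1 - 2 * e)
  have hI : 0 ≤ I := integral_nonneg fun x ↦ by positivity
  refine ⟨A * I + 1, by positivity, fun δ hδ hδ1 ↦ ?_⟩
  have hball := abs_setIntegral_ball_weightedBubbleSq_sub_le volume hc he hδ hr₀
  rw [finrank_euclideanSpace_fin, show 2 - 2 * e + n = (4 : ℕ) by push_cast; ring, rpow_natCast,
    mul_rpow (by positivity) hδ.le] at hball
  have hδ5 : δ ^ (2 * e) ≤ δ ^ 5 := by
    rw [h2e, ← rpow_natCast]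
    exact rpow_le_rpow_of_exponent_ge hδ hδ1 (by norm_num; linarith)
  rw [hUb', hU']
  calc _ ≤ A * δ ^ (2 * e) * I := hball
    _ ≤ A * δ ^ 5 * I := by gcongr
    _ ≤ (A * I + 1) * δ ^ 5 := by nlinarith [pow_pos hδ 5]
end
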